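/- arXiv:1810.06762 — 3 statements merged into one kernel-verified Lean document; each statement's English description precedes it below -/
import Mathlib

section
/- Let L be a finite distributive lattice and K a closed interval of L. Then K is a cutting (i.e., every maximal chain of L contains at least one element of K) if and only if L equals the union of the up-set of the bottom of K and the down-set of the top of K, i.e., L = ↑(⊥_K) ∪ ↓(⊤_K). -/
/-!
If every element lies above `a` or below `b`, a maximal chain `C` meets `[a, b]`: the join `z`
of `a` and of the elements of `C` below `b` lies in `[a, b]`, and it is comparable with every
`c ∈ C` (if `c ≤ b` then `c ≤ z`; otherwise `a ≤ c` and `c` lies above each element of `C`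
below `b`, so `z ≤ c`), hence `z ∈ C` by maximality. Conversely, an element `x` with `a ≰ x`
and `x ≰ b` lies on a maximal chain, which cannot meet `[a, b]` since its elements are
comparable with `x`.
-/

theorem IsMaxChain.mem_of_forall_ne {α : Type*} {r : α → α → Prop} {s : Set α} {x : α}
    (hs : IsMaxChain r s) (hx : ∀ c ∈ s, x ≠ c → r x c ∨ r c x) : x ∈ s :=
  (hs.2 (hs.1.insert hx) (Set.subset_insert _ _)).symm ▸ Set.mem_insert _ _

theorem IsMaxChain.inter_Icc_nonempty {L : Type*} [Lattice L] {C : Set L}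
    (hC : IsMaxChain (· ≤ ·) C) {a b : L} (hab : a ≤ b) (hfin : (C ∩ Set.Iic b).Finite)
    (hcover : ∀ y, a ≤ y ∨ y ≤ b) : (C ∩ Set.Icc a b).Nonempty := by
  classical
  set z := (insert a hfin.toFinset).sup' (Finset.insert_nonempty _ _) id
  have ha_le_z : a ≤ z := Finset.le_sup' id (Finset.mem_insert_self _ _)
  have hz_le_b : z ≤ b := Finset.sup'_le _ _ fun c hc => by
    rcases Finset.mem_insert.1 hc with rfl | hc
    · exact hab
    · exact (hfin.mem_toFinset.1 hc).2
  have hzC : z ∈ C := hC.mem_of_forall_ne fun c hc _ => by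
    by_cases hcb : c ≤ b
    · exact Or.inr (Finset.le_sup' id (Finset.mem_insert_of_mem (hfin.mem_toFinset.2 ⟨hc, hcb⟩)))
    refine Or.inl (Finset.sup'_le _ _ fun d hd => ?_)
    rcases Finset.mem_insert.1 hd with rfl | hd
    · exact (hcover c).resolve_right hcb
    · obtain ⟨hdC, hdb⟩ := hfin.mem_toFinset.1 hd
      exact (hC.1.total hdC hc).resolve_right fun hcd => hcb (hcd.trans hdb)
  exact ⟨z, hzC, ha_le_z, hz_le_b⟩

theorem forall_le_or_le_of_forall_isMaxChain_inter_Icc_nonempty {P : Type*} [Preorder P]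
    {a b : P} (h : ∀ C : Set P, IsMaxChain (· ≤ ·) C → (C ∩ Set.Icc a b).Nonempty) (x : P) :
    a ≤ x ∨ x ≤ b := by
  obtain ⟨C, hC, hxC⟩ := (Set.subsingleton_singleton (a := x)).isChain.exists_maxChain
  obtain ⟨c, hcC, hac, hcb⟩ := h C hC
  exact (hC.1.total hcC (hxC rfl)).imp hac.trans fun hxc => hxc.trans hcb

/-- An interval `K = [a, b]` of a finite distributive lattice `L` is a cutting
(every maximal chain of `L` meets `K`) iff `L = ↑a ∪ ↓b`. -/
theorem cutting_iff_union (L : Type*) [DistribLattice L] [Fintype L]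
    (a b : L) (hab : a ≤ b) :
    (∀ C : Set L, IsMaxChain (· ≤ ·) C → (C ∩ Set.Icc a b).Nonempty) ↔
      (Set.univ : Set L) = Set.Ici a ∪ Set.Iic b := by
  have hcover_iff : (Set.univ : Set L) = Set.Ici a ∪ Set.Iic b ↔ ∀ y, a ≤ y ∨ y ≤ b := by
    rw [eq_comm, Set.eq_univ_iff_forall]
    simp only [Set.mem_union, Set.mem_Ici, Set.mem_Iic]
  rw [hcover_iff]
  exact ⟨forall_le_or_le_of_forall_isMaxChain_inter_Icc_nonempty,
    fun hcover C hC => hC.inter_Icc_nonempty hab (Set.toFinite _) hcover⟩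
end

section
/- The number of upper sets of the crown poset ⋈_{2n} (the 2n-element crown) equals the Lucas number L_{2n}, and L_{2n} = F_{2n+1} + F_{2n-1}. -/
/-- Lucas numbers: `L_0 = 2`, `L_1 = 1`, `L_{k+2} = L_{k+1} + L_k`
(so `L_2 = 3`). -/
def lucas : ℕ → ℕ
  | 0 => 2
  | 1 => 1
  | n + 2 => lucas (n + 1) + lucas n

/-- The crown poset `⋈_{2n}` on minimal elements `a_1, …, a_n` and maximal elements
`b_1, …, b_n`, with `a_i < b_i` and `a_i < b_{i+1}` (indices mod `n`). -/
def Crown (n : ℕ) := Fin n ⊕ Fin n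

instance (n : ℕ) [NeZero n] : PartialOrder (Crown n) where
  le x y := x = y ∨ ∃ i j : Fin n, x = Sum.inl i ∧ y = Sum.inr j ∧ (j = i ∨ j = i + 1)
  le_refl _ := Or.inl rfl
  le_trans a b c hab hbc := by
    rcases hab with rfl | ⟨i, j, rfl, rfl, hij⟩
    · exact hbc
    · rcases hbc with rfl | ⟨i', j', h, _, _⟩
      · exact Or.inr ⟨i, j, rfl, rfl, hij⟩
      · exact absurd h (by simp)
  le_antisymm a b hab hba := by
    rcases hab with rfl | ⟨i, j, rfl, rfl, _⟩
    · rfl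
    · rcases hba with h | ⟨i', j', h, _, _⟩
      · exact h.symm
      · exact absurd h (by simp)

instance (n : ℕ) : Fintype (Crown n) := inferInstanceAs (Fintype (Fin n ⊕ Fin n))

/-! An upper set `F` of the crown is the same as a cyclic sequence of states
`(a_i ∈ F, b_i ∈ F) ∈ Bool²`, `i ∈ ℤ/n`, subject only to a constraint between consecutive
states: `a_i ∈ F` forces `b_i ∈ F` and `b_{i+1} ∈ F`. Such cyclic sequences are counted by
`tr Tⁿ`, where `T` is the 0/1 transfer matrix of the constraint. `T` has eigenvalues
`φ², ψ², 0, 0`, and indeed the entries of `Tⁿ` are Fibonacci numbers, giving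
`tr Tⁿ = 2 F_{2n-1} + F_{2n} = F_{2n+1} + F_{2n-1} = L_{2n}`. -/

open Finset Matrix

theorem lucas_eq_fib_add_fib : ∀ n, n ≠ 0 → lucas n = Nat.fib (n + 1) + Nat.fib (n - 1)
  | 1, _ => rfl
  | 2, _ => rfl
  | n + 3, _ => by
    rw [lucas, lucas_eq_fib_add_fib (n + 2) (by omega), lucas_eq_fib_add_fib (n + 1) (by omega)]
    simp only [Nat.fib_add_two, Nat.add_one_sub_one, add_tsub_cancel_right]
    omega

theorem Fin.sum_univ_pi_succ {α M : Type*} [Fintype α] [AddCommMonoid M] {k : ℕ}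
    (F : (Fin (k + 1) → α) → M) : ∑ g, F g = ∑ c, ∑ g : Fin k → α, F (Fin.cons c g) := by
  rw [← (Fin.consEquiv fun _ => α).sum_comp, Fintype.sum_prod_type]
  rfl

theorem Fin.cons_add_one {α : Type*} {m : ℕ} (a : α) (g : Fin m → α) (i : Fin (m + 1)) :
    (Fin.cons a g : Fin (m + 1) → α) (i + 1) = (Fin.snoc g a : Fin (m + 1) → α) i := by
  cases i using Fin.lastCases with
  | last => simp [Fin.last_add_one]
  | cast j => simp [Fin.coeSucc_eq_succ]

namespace Matrix

variable {α : Type*} [Fintype α] [DecidableEq α]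

theorem pow_succ_apply_eq_sum_prod {R : Type*} [CommSemiring R] (A : Matrix α α R) (k : ℕ)
    (a b : α) :
    (A ^ (k + 1)) a b = ∑ g : Fin k → α, ∏ i : Fin (k + 1),
      A ((Fin.cons a g : Fin (k + 1) → α) i) ((Fin.snoc g b : Fin (k + 1) → α) i) := by
  induction k generalizing a with
  | zero => simp [Fin.snoc]
  | succ k ih =>
    rw [pow_succ', mul_apply, Fin.sum_univ_pi_succ]
    refine Finset.sum_congr rfl fun c _ => ?_
    simp only [ih, Finset.mul_sum, ← Fin.cons_snoc_eq_snoc_cons, Fin.prod_univ_succ,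
      Fin.cons_zero, Fin.cons_succ]

theorem trace_pow_eq_sum_prod {R : Type*} [CommSemiring R] (A : Matrix α α R) (n : ℕ)
    [NeZero n] : trace (A ^ n) = ∑ f : Fin n → α, ∏ i, A (f i) (f (i + 1)) := by
  obtain ⟨m, rfl⟩ := Nat.exists_eq_succ_of_ne_zero (NeZero.ne n)
  simp only [trace, diag, pow_succ_apply_eq_sum_prod, Fin.sum_univ_pi_succ, Fin.cons_add_one]

theorem card_cyclic_eq_trace_pow (r : α → α → Prop) [DecidableRel r] (n : ℕ) [NeZero n] :
    Fintype.card {f : Fin n → α // ∀ i, r (f i) (f (i + 1))} =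
      trace ((of fun a b => if r a b then 1 else 0 : Matrix α α ℕ) ^ n) := by
  rw [trace_pow_eq_sum_prod, Fintype.card_subtype, card_filter]
  simp only [of_apply, prod_boole, mem_univ, true_implies]

end Matrix

namespace Crown

theorem isUpperSet_iff {n : ℕ} [NeZero n] {F : Set (Crown n)} :
    IsUpperSet F ↔
      ∀ i, (.inl i : Crown n) ∈ F → (.inr i : Crown n) ∈ F ∧ (.inr (i + 1) : Crown n) ∈ F := by
  refine ⟨fun h i hi => ⟨h (Or.inr ⟨i, i, rfl, rfl, Or.inl rfl⟩) hi,
    h (Or.inr ⟨i, i + 1, rfl, rfl, Or.inr rfl⟩) hi⟩, fun h x y hxy hx => ?_⟩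
  rcases hxy with rfl | ⟨i, j, rfl, rfl, rfl | rfl⟩
  exacts [hx, (h _ hx).1, (h _ hx).2]

open Classical in
noncomputable def setEquiv (n : ℕ) : Set (Crown n) ≃ (Fin n → Bool × Bool) where
  toFun F i := (decide ((.inl i : Crown n) ∈ F), decide ((.inr i : Crown n) ∈ F))
  invFun f := {x | Sum.elim (fun i => (f i).1) (fun i => (f i).2) x}
  left_inv F := by ext (i | i) <;> exact decide_eq_true_iff
  right_inv f := by ext i <;> exact Bool.decide_eq_true

noncomputable def upperSetEquiv (n : ℕ) [NeZero n] :
    {F : Set (Crown n) // IsUpperSet F} ≃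
      {f : Fin n → Bool × Bool // ∀ i, (f i).1 → (f i).2 ∧ (f (i + 1)).2} :=
  (setEquiv n).subtypeEquiv fun F => isUpperSet_iff.trans (by simp [setEquiv])

def transferMatrix : Matrix (Bool × Bool) (Bool × Bool) ℕ :=
  of fun p q => if p.1 → p.2 ∧ q.2 then 1 else 0

theorem transferMatrix_pow_succ (k : ℕ) :
    transferMatrix ^ (k + 1) = of fun p q =>
      if p.1 then (if p.2 then Nat.fib (2 * k + q.2.toNat) else 0)
      else Nat.fib (2 * k + 1 + q.2.toNat) := by
  induction k with
  | zero => ext ⟨_ | _, _ | _⟩ ⟨_ | _, _ | _⟩ <;> simp [transferMatrix]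
  | succ k ih =>
    rw [pow_succ, ih]
    ext ⟨_ | _, _ | _⟩ ⟨_ | _, _ | _⟩ <;>
      simp [mul_apply, Fintype.sum_prod_type, transferMatrix, Nat.mul_succ, Nat.fib_add_two] <;>
      ring

theorem trace_transferMatrix_pow (n : ℕ) (hn : n ≠ 0) :
    trace (transferMatrix ^ n) = Nat.fib (2 * n + 1) + Nat.fib (2 * n - 1) := by
  obtain ⟨k, rfl⟩ := Nat.exists_eq_succ_of_ne_zero hn
  rw [transferMatrix_pow_succ, show 2 * (k + 1) + 1 = 2 * k + 1 + 2 by ring,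
    show 2 * (k + 1) - 1 = 2 * k + 1 by omega, Nat.fib_add_two]
  simp [trace, Fintype.sum_prod_type, add_assoc]

end Crown

/-- The number of upper sets of the crown `⋈_{2n}` equals the Lucas number `L_{2n}`,
and `L_{2n} = F_{2n+1} + F_{2n−1}`. -/
theorem crown_upperSets_lucas (n : ℕ) (hn : 1 ≤ n) :
    haveI : NeZero n := ⟨by omega⟩
    Nat.card {F : Set (Crown n) // IsUpperSet F} = lucas (2 * n) ∧
      lucas (2 * n) = Nat.fib (2 * n + 1) + Nat.fib (2 * n - 1) := by
  have : NeZero n := ⟨by omega⟩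
  have hlucas := lucas_eq_fib_add_fib (2 * n) (by omega)
  refine ⟨?_, hlucas⟩
  rw [Nat.card_congr (Crown.upperSetEquiv n), Nat.card_eq_fintype_card,
    card_cyclic_eq_trace_pow (fun p q : Bool × Bool => p.1 → p.2 ∧ q.2), ← Crown.transferMatrix,
    Crown.trace_transferMatrix_pow n (by omega), hlucas]
end

section
/- Let L be a finite distributive lattice and let q_k(L) denote the number of intervals of L that are isomorphic to the Boolean lattice B_k of rank k (equivalently, intervals [x,y] such that y is the join of k atoms of [x,y] and [x,y] is Boolean). Then q_0(L) − q_1(L) + q_2(L) − q_3(L) + ⋯ = 1. -/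
/-!
Fix the bottom `x`. For `x ≤ z`, distributivity gives
`z ⊓ (x ⊔ S.sup id) = x ⊔ {a ∈ S | a ≤ z}.sup id` whenever `S` consists of upper covers of `x`,
so `z ↦ {a ∈ S | a ≤ z}` identifies `[x, x ⊔ S.sup id]` with the subsets of `S`. Conversely the
atoms of an interval `[x, y] ≅ B_k` are `k` upper covers of `x` with join `y`. Hence
`q_k = ∑ₓ C(c x, k)`, where `c x` is the number of upper covers of `x`, and the alternating sum
over `k` counts the elements without upper covers: only `⊤`.
-/

open Finset

theorem CovBy.inf_eq_of_not_le {L : Type*} [Lattice L] {x z a : L} (ha : x ⋖ a) (hxz : x ≤ z)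
    (haz : ¬a ≤ z) : z ⊓ a = x :=
  (ha.eq_or_eq (le_inf hxz ha.le) inf_le_right).resolve_right fun h => haz (h ▸ inf_le_left)

theorem exists_covBy_family_of_orderIso {L ι : Type*} [Lattice L] [OrderBot L] [Fintype ι]
    {x y : L} (e : Set.Icc x y ≃o Set ι) :
    ∃ f : ι → L, Function.Injective f ∧ (∀ i, x ⋖ f i) ∧ x ⊔ univ.sup f = y := by
  have hxy : x ≤ y := (e.symm ∅).2.1.trans (e.symm ∅).2.2
  let f (i : ι) : L := e.symm {i}
  have hbot : e.symm ∅ = ⟨x, le_rfl, hxy⟩ :=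
    le_antisymm (e.symm_apply_le.2 (Set.empty_subset _)) (e.symm ∅).2.1
  have hcov (i : ι) : x ⋖ f i := by
    have h : e.symm ∅ ⋖ e.symm {i} :=
      (apply_covBy_apply_iff e.symm).2 (Set.isAtom_singleton i).bot_covBy
    rw [hbot] at h
    refine h.image (OrderEmbedding.subtype _) ?_
    rw [OrderEmbedding.coe_subtype, Subtype.range_coe]
    exact Set.ordConnected_Icc
  have hle : x ⊔ univ.sup f ≤ y := sup_le hxy (Finset.sup_le fun i _ => (e.symm {i}).2.2)
  refine ⟨f, fun i j h => Set.singleton_injective (e.symm.injective (Subtype.ext h)), hcov,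
    le_antisymm hle ?_⟩
  let m : Set.Icc x y := ⟨x ⊔ univ.sup f, le_sup_left, hle⟩
  have hm (i : ι) : {i} ⊆ e m :=
    e.symm_apply_le.1 (show f i ≤ m from le_sup_of_le_right (le_sup (mem_univ i)))
  exact (e.le_iff_le.1 fun i _ => hm i rfl : (⟨y, hxy, le_rfl⟩ : Set.Icc x y) ≤ m)

section DistribLattice

variable {L ι : Type*} [DistribLattice L] [OrderBot L] {x y z a : L} {f : ι → L}

theorem inf_sup_finsetSup_of_covBy [DecidablePred (f · ≤ z)] {s : Finset ι}
    (hs : ∀ i ∈ s, x ⋖ f i) (hxz : x ≤ z) :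
    z ⊓ (x ⊔ s.sup f) = x ⊔ {i ∈ s | f i ≤ z}.sup f := by
  have hmeet : ∀ i ∈ s, z ⊓ f i = if f i ≤ z then f i else x := fun i hi => by
    split_ifs with h
    · exact inf_eq_right.2 h
    · exact (hs i hi).inf_eq_of_not_le hxz h
  rw [inf_sup_left, inf_eq_right.2 hxz, sup_inf_distrib_left, sup_congr rfl hmeet, sup_ite,
    ← sup_assoc, sup_right_comm, sup_eq_left.2 (Finset.sup_le fun _ _ => le_rfl)]

theorem sup_finsetSup_filter_le_eq [DecidablePred (f · ≤ z)] {s : Finset ι}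
    (hs : ∀ i ∈ s, x ⋖ f i) (hxz : x ≤ z) (hz : z ≤ x ⊔ s.sup f) :
    x ⊔ {i ∈ s | f i ≤ z}.sup f = z := by
  rw [← inf_sup_finsetSup_of_covBy hs hxz, inf_eq_left.2 hz]

theorem not_le_sup_finsetSup_of_covBy {s : Finset ι} (hs : ∀ i ∈ s, x ⋖ f i) (ha : x ⋖ a)
    (hne : ∀ i ∈ s, f i ≠ a) : ¬a ≤ x ⊔ s.sup f := by
  classical
  intro hle
  have hfilter : {i ∈ s | f i ≤ a} = ∅ := filter_eq_empty_iff.2 fun i hi hia =>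
    hne i hi ((ha.eq_or_eq (hs i hi).le hia).resolve_left (hs i hi).ne')
  have h := inf_sup_finsetSup_of_covBy hs ha.le
  rw [inf_eq_left.2 hle, hfilter, sup_empty, sup_bot_eq] at h
  exact ha.ne' h

open Classical in
noncomputable def iccSupOrderIsoFinset [Fintype ι] (hf : Function.Injective f)
    (hcov : ∀ i, x ⋖ f i) : Set.Icc x (x ⊔ univ.sup f) ≃o Finset ι where
  toFun z := {i | f i ≤ z}
  invFun t := ⟨x ⊔ t.sup f, le_sup_left, sup_le_sup_left (sup_mono (subset_univ t)) x⟩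
  left_inv z := Subtype.ext (sup_finsetSup_filter_le_eq (fun i _ => hcov i) z.2.1 z.2.2)
  right_inv t := by
    ext i
    simp only [mem_filter, mem_univ, true_and]
    refine ⟨fun hi => ?_, fun hi => le_sup_of_le_right (le_sup hi)⟩
    by_contra hit
    exact not_le_sup_finsetSup_of_covBy (fun j _ => hcov j) (hcov i)
      (fun j hj hji => hit (hf hji ▸ hj)) hi
  map_rel_iff' {z w} := by
    refine ⟨fun h => ?_, fun h i => by simpa using fun hi => hi.trans h⟩
    rw [← Subtype.coe_le_coe, ← sup_finsetSup_filter_le_eq (fun i _ => hcov i) z.2.1 z.2.2,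
      ← sup_finsetSup_filter_le_eq (fun i _ => hcov i) w.2.1 w.2.2]
    exact sup_le_sup_left (sup_mono h) x

theorem sup_finsetSup_injOn_covBy :
    Set.InjOn (fun S : Finset L => x ⊔ S.sup id) {S | ∀ a ∈ S, x ⋖ a} := by
  have hsub {S T : Finset L} (hS : ∀ a ∈ S, x ⋖ a) (hT : ∀ a ∈ T, x ⋖ a)
      (h : x ⊔ S.sup id = x ⊔ T.sup id) : S ⊆ T := fun a ha => by
    by_contra haT
    exact not_le_sup_finsetSup_of_covBy hT (hS a ha) (fun b hb hba => haT (hba ▸ hb))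
      (h ▸ le_sup_of_le_right (le_sup (f := id) ha))
  exact fun S hS T hT h => (hsub hS hT h).antisymm (hsub hT hS h.symm)

theorem nonempty_Icc_orderIso_set_fin_iff {k : ℕ} :
    x ≤ y ∧ Nonempty (Set.Icc x y ≃o Set (Fin k)) ↔
      ∃ S : Finset L, (∀ a ∈ S, x ⋖ a) ∧ #S = k ∧ x ⊔ S.sup id = y := by
  classical
  constructor
  · rintro ⟨-, ⟨e⟩⟩
    obtain ⟨f, hf, hcov, rfl⟩ := exists_covBy_family_of_orderIso e
    exact ⟨univ.image f, by simpa using hcov, by simp [card_image_of_injective _ hf],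
      by rw [sup_image]; rfl⟩
  · rintro ⟨S, hS, rfl, rfl⟩
    have e := iccSupOrderIsoFinset (f := ((↑) : S → L)) Subtype.val_injective fun a => hS a a.2
    rw [univ_eq_attach, show S.attach.sup Subtype.val = S.sup id from sup_attach S id] at e
    exact ⟨le_sup_left, ⟨e.trans (Fintype.finsetOrderIsoSet.trans S.equivFin.toOrderIsoSet)⟩⟩

end DistribLattice

theorem Int.alternating_sum_range_choose_of_le {n N : ℕ} (h : n ≤ N) :
    ∑ k ∈ Finset.range (N + 1), (-1 : ℤ) ^ k * n.choose k = if n = 0 then 1 else 0 := by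
  rw [← Int.alternating_sum_range_choose]
  refine (sum_subset (range_subset_range.2 (by omega)) fun k _ hk => ?_).symm
  rw [Nat.choose_eq_zero_of_lt (by simpa using hk), Nat.cast_zero, mul_zero]

section Fintype

variable {L : Type*} [Fintype L]

open Classical in
noncomputable def upperCovers [Preorder L] (x : L) : Finset L := {a | x ⋖ a}

@[simp]
theorem mem_upperCovers [Preorder L] {x a : L} : a ∈ upperCovers x ↔ x ⋖ a := by
  simp [upperCovers]

theorem upperCovers_eq_empty_iff [PartialOrder L] [OrderTop L] {x : L} :
    upperCovers x = ∅ ↔ x = ⊤ := by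
  refine ⟨fun h => by_contra fun hx => ?_, fun hx => ?_⟩
  · obtain ⟨a, hxa, -⟩ := exists_covBy_le_of_lt (lt_top_iff_ne_top.2 hx)
    simpa [h] using mem_upperCovers.2 hxa
  · simp [eq_empty_iff_forall_notMem, hx]

variable [DistribLattice L] [OrderBot L]

theorem natCard_Icc_orderIso_set_fin (x : L) (k : ℕ) :
    Nat.card {y // x ≤ y ∧ Nonempty (Set.Icc x y ≃o Set (Fin k))} =
      (#(upperCovers x)).choose k := by
  classical
  have himage : ({y | x ≤ y ∧ Nonempty (Set.Icc x y ≃o Set (Fin k))} : Finset L) =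
      ((upperCovers x).powersetCard k).image fun S => x ⊔ S.sup id := by
    ext y
    simp [nonempty_Icc_orderIso_set_fin_iff, mem_powersetCard, subset_iff, and_assoc]
  rw [Nat.card_eq_fintype_card, Fintype.card_subtype, himage, card_image_of_injOn,
    card_powersetCard]
  refine sup_finsetSup_injOn_covBy.mono fun S hS => ?_
  exact fun a ha => mem_upperCovers.1 ((mem_powersetCard.1 hS).1 ha)

theorem natCard_boolean_intervals (k : ℕ) :
    Nat.card {p : L × L // p.1 ≤ p.2 ∧ Nonempty (Set.Icc p.1 p.2 ≃o Set (Fin k))} =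
      ∑ x : L, (#(upperCovers x)).choose k := by
  rw [Nat.card_congr (Equiv.subtypeProdEquivSigmaSubtype
    fun x y => x ≤ y ∧ Nonempty (Set.Icc x y ≃o Set (Fin k))), Nat.card_sigma]
  simp_rw [natCard_Icc_orderIso_set_fin]

end Fintype

/-- For a finite distributive lattice `L`, where `q k` denotes the number of intervals
of `L` isomorphic to the Boolean lattice `B_k` of rank `k`, the alternating sum
`q 0 − q 1 + q 2 − q 3 + ⋯` equals `1`. -/
theorem alternating_sum_boolean_intervals (L : Type*) [DistribLattice L] [Fintype L]
    [Nonempty L] :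
    ∑ k ∈ Finset.range (Fintype.card L + 1),
      (-1 : ℤ) ^ k *
        (Nat.card {p : L × L // p.1 ≤ p.2 ∧
          Nonempty (Set.Icc p.1 p.2 ≃o Set (Fin k))} : ℤ) = 1 := by
  classical
  let _ : BoundedOrder L := Fintype.toBoundedOrder L
  calc _ = ∑ x : L, ∑ k ∈ Finset.range (Fintype.card L + 1),
        (-1 : ℤ) ^ k * ((#(upperCovers x)).choose k : ℤ) := by
        simp_rw [natCard_boolean_intervals, Nat.cast_sum, mul_sum]
        exact sum_comm
    _ = ∑ x : L, if x = ⊤ then 1 else 0 := by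
        refine sum_congr rfl fun x _ => ?_
        simp_rw [Int.alternating_sum_range_choose_of_le (card_le_univ _), card_eq_zero,
          upperCovers_eq_empty_iff]
    _ = 1 := by simp
end
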